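/- arXiv:2410.17181 — 3 statements merged into one kernel-verified Lean document; each statement's English description precedes it below -/
import Mathlib

section
/- Let a = N_T/(1+N_T), b = N_S(N_T-η+1)/((1+N_S)(1+N_T)), c² = η N_S/((1+N_T)²(1+N_S)), d = 1/((1+N_T)(1+N_S)), z = η/((N_T-η+1)N_T), and α = (a/(1-a))(b/(1-b))z, where 0 < η ≤ 1, N_S > 0, N_T > η. Then for every integer Δ ≥ 1, (d/((1-a)(1-b))) · (c²/((1-a)(1-b)))^Δ · (1-α)^{-Δ-1} = (η N_S/(1+N_T))^Δ. -/
/-!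
With `K = 1 + N_T + η N_S` every factor collapses: `1 - a = 1/(1 + N_T)`,
`1 - b = K/((1 + N_S)(1 + N_T))`, hence `d/((1-a)(1-b)) = 1 - α = (1 + N_T)/K` and
`c²/((1-a)(1-b)) = η N_S/K`. The claim is then `p/K · (q/K)^Δ · (p/K)^(-Δ-1) = (q/p)^Δ`.
-/

theorem div_mul_div_pow_mul_div_zpow_neg_sub_one {𝕜 : Type*} [Field 𝕜] {p r : 𝕜}
    (hp : p ≠ 0) (hr : r ≠ 0) (q : 𝕜) (n : ℕ) :
    p / r * (q / r) ^ n * (p / r) ^ (-(n : ℤ) - 1) = (q / p) ^ n := by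
  rw [show -(n : ℤ) - 1 = -((n + 1 : ℕ) : ℤ) by push_cast; ring, zpow_neg, zpow_natCast,
    div_pow, div_pow, div_pow, pow_succ, pow_succ]
  field_simp

section ChannelParameters

variable {η NS NT : ℝ}

theorem one_sub_div_one_add (hT : 1 + NT ≠ 0) : 1 - NT / (1 + NT) = 1 / (1 + NT) := by
  field_simp
  ring

theorem one_sub_signal_param (hS : 1 + NS ≠ 0) (hT : 1 + NT ≠ 0) :
    1 - NS * (NT - η + 1) / ((1 + NS) * (1 + NT))
      = (1 + NT + NS * η) / ((1 + NS) * (1 + NT)) := by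
  field_simp
  ring

theorem noise_param_div_eq (hS : 1 + NS ≠ 0) (hT : 1 + NT ≠ 0) :
    1 / ((1 + NT) * (1 + NS))
        / ((1 - NT / (1 + NT)) * (1 - NS * (NT - η + 1) / ((1 + NS) * (1 + NT))))
      = (1 + NT) / (1 + NT + NS * η) := by
  rw [one_sub_div_one_add hT, one_sub_signal_param hS hT]
  field_simp

theorem cross_param_div_eq (hS : 1 + NS ≠ 0) (hT : 1 + NT ≠ 0) :
    η * NS / ((1 + NT) ^ 2 * (1 + NS))
        / ((1 - NT / (1 + NT)) * (1 - NS * (NT - η + 1) / ((1 + NS) * (1 + NT))))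
      = η * NS / (1 + NT + NS * η) := by
  rw [one_sub_div_one_add hT, one_sub_signal_param hS hT]
  field_simp

theorem one_sub_alpha_eq (hS : 1 + NS ≠ 0) (hT : 1 + NT ≠ 0) (hK : 1 + NT + NS * η ≠ 0)
    (hE : NT - η + 1 ≠ 0) (hN : NT ≠ 0) :
    1 - NT / (1 + NT) / (1 - NT / (1 + NT))
        * (NS * (NT - η + 1) / ((1 + NS) * (1 + NT))
          / (1 - NS * (NT - η + 1) / ((1 + NS) * (1 + NT))))
        * (η / ((NT - η + 1) * NT))
      = (1 + NT) / (1 + NT + NS * η) := by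
  rw [one_sub_div_one_add hT, one_sub_signal_param hS hT]
  field_simp
  ring

end ChannelParameters

theorem stmt7_general (η NS NT : ℝ) (hη0 : 0 < η) (hNS : 0 < NS) (hNT : η < NT)
    (Δ : ℕ) :
    let a := NT / (1 + NT)
    let b := NS * (NT - η + 1) / ((1 + NS) * (1 + NT))
    let c2 := η * NS / ((1 + NT) ^ 2 * (1 + NS))
    let d := 1 / ((1 + NT) * (1 + NS))
    let z := η / ((NT - η + 1) * NT)
    let α := (a / (1 - a)) * (b / (1 - b)) * z
    d / ((1 - a) * (1 - b)) * (c2 / ((1 - a) * (1 - b))) ^ Δ * (1 - α) ^ (-(Δ : ℤ) - 1)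
      = (η * NS / (1 + NT)) ^ Δ := by
  intro a b c2 d z α
  have hN : 0 < NT := hη0.trans hNT
  have hS : 1 + NS ≠ 0 := by positivity
  have hT : 1 + NT ≠ 0 := by positivity
  have hK : 1 + NT + NS * η ≠ 0 := by positivity
  have hE : NT - η + 1 ≠ 0 := by linarith
  rw [noise_param_div_eq hS hT, cross_param_div_eq hS hT,
    one_sub_alpha_eq hS hT hK hE hN.ne']
  exact div_mul_div_pow_mul_div_zpow_neg_sub_one hT hK _ Δ

theorem stmt7 (η NS NT : ℝ) (hη0 : 0 < η) (hη1 : η ≤ 1) (hNS : 0 < NS) (hNT : η < NT)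
    (Δ : ℕ) (hΔ : 1 ≤ Δ) :
    let a := NT / (1 + NT)
    let b := NS * (NT - η + 1) / ((1 + NS) * (1 + NT))
    let c2 := η * NS / ((1 + NT) ^ 2 * (1 + NS))
    let d := 1 / ((1 + NT) * (1 + NS))
    let z := η / ((NT - η + 1) * NT)
    let α := (a / (1 - a)) * (b / (1 - b)) * z
    d / ((1 - a) * (1 - b)) * (c2 / ((1 - a) * (1 - b))) ^ Δ * (1 - α) ^ (-(Δ : ℤ) - 1)
      = (η * NS / (1 + NT)) ^ Δ :=
  stmt7_general η NS NT hη0 hNS hNT Δ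
end

section
/- With p(n₁,n₂) as the diagonal distribution d·a^{n₁}·b^{n₂}·F[-n₁,-n₂;1,z] (a = N_T/(1+N_T), b = N_S(N_T-η+1)/((1+N_S)(1+N_T)), d = 1/((1+N_T)(1+N_S)), z = η/((N_T-η+1)N_T), with 0<η<1, N_S>0, N_T>η), the first marginal mean is ∑_{n₁,n₂} n₁ · p(n₁,n₂) = η N_S + N_T. -/
/-!
Summing out the second mode first: `∑ₙ C(n,k) bⁿ = bᵏ/(1-b)^(k+1)` turns the inner
hypergeometric sum into a binomial expansion, so the first marginal is
`d/(1-b) · (a(1 + zb/(1-b)))ⁿ¹`. For the channel parameters this is exactly the thermal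
distribution of mean `η N_S + N_T`.
-/

open Finset

theorem sum_range_min_succ_choose_mul_choose {R : Type*} [CommSemiring R] (m n : ℕ) (z : R) :
    ∑ k ∈ range (min m n + 1), (m.choose k : R) * (n.choose k : R) * z ^ k =
      ∑ k ∈ range (m + 1), (m.choose k : R) * (n.choose k : R) * z ^ k := by
  refine sum_subset (fun k hk => ?_) fun k hk hk' => ?_
  · simp only [mem_range] at hk ⊢
    omega
  · simp only [mem_range] at hk hk'
    simp [Nat.choose_eq_zero_of_lt (show n < k by omega)]

section NormedField

variable {𝕜 : Type*} [NormedField 𝕜]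

theorem hasSum_choose_mul_pow (k : ℕ) {x : 𝕜} (hx : ‖x‖ < 1) :
    HasSum (fun n : ℕ => (n.choose k : 𝕜) * x ^ n) (x ^ k / (1 - x) ^ (k + 1)) := by
  have hshift : HasSum (fun n => ((n + k).choose k : 𝕜) * x ^ (n + k))
      (x ^ k / (1 - x) ^ (k + 1)) := by
    rw [div_eq_mul_one_div]
    exact ((hasSum_choose_mul_geometric_of_norm_lt_one k hx).mul_left (x ^ k)).congr_fun
      fun n => by ring
  refine (hasSum_nat_add_iff' k).1 ?_
  rwa [sum_eq_zero fun i hi => by simp [Nat.choose_eq_zero_of_lt (mem_range.1 hi)], sub_zero]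

theorem hasSum_pow_mul_sum_choose_mul_choose (m : ℕ) {b : 𝕜} (hb : ‖b‖ < 1) (z : 𝕜) :
    HasSum (fun n : ℕ => b ^ n *
        ∑ k ∈ range (min m n + 1), (m.choose k : 𝕜) * (n.choose k : 𝕜) * z ^ k)
      ((z * b / (1 - b) + 1) ^ m / (1 - b)) := by
  have hb1 : 1 - b ≠ 0 := sub_ne_zero.2 fun h => by simp [← h] at hb
  have hterm : ∀ k ∈ range (m + 1), HasSum
      (fun n : ℕ => (m.choose k : 𝕜) * z ^ k * ((n.choose k : 𝕜) * b ^ n))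
      ((m.choose k : 𝕜) * z ^ k * (b ^ k / (1 - b) ^ (k + 1))) :=
    fun k _ => (hasSum_choose_mul_pow k hb).mul_left _
  have hval : ∑ k ∈ range (m + 1), (m.choose k : 𝕜) * z ^ k * (b ^ k / (1 - b) ^ (k + 1)) =
      (z * b / (1 - b) + 1) ^ m / (1 - b) := by
    rw [add_pow, sum_div]
    refine sum_congr rfl fun k _ => ?_
    rw [one_pow, mul_one, div_pow, mul_pow, pow_succ]
    field_simp
  rw [← hval]
  refine (hasSum_sum hterm).congr_fun fun n => ?_
  rw [sum_range_min_succ_choose_mul_choose, mul_sum]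
  exact sum_congr rfl fun k _ => by ring

end NormedField

theorem HasSum.prod_of_nonneg {α β : Type*} {f : α × β → ℝ} (hf : 0 ≤ f) {g : α → ℝ} {s : ℝ}
    (hfib : ∀ x, HasSum (fun y => f (x, y)) (g x)) (hg : HasSum g s) : HasSum f s := by
  have hsum : Summable f :=
    (summable_prod_of_nonneg hf).2 ⟨fun x => (hfib x).summable,
      by simpa only [fun x => (hfib x).tsum_eq] using hg.summable⟩
  convert hsum.hasSum
  rw [hsum.tsum_prod' fun x => (hfib x).summable, tsum_congr fun x => (hfib x).tsum_eq,
    hg.tsum_eq]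

/-- The thermal (Bose–Einstein) photon-number distribution of mean `N`. -/
noncomputable def thermalDist (N : ℝ) (n : ℕ) : ℝ := 1 / (1 + N) * (N / (1 + N)) ^ n

theorem hasSum_coe_mul_thermalDist {N : ℝ} (hN : 0 ≤ N) :
    HasSum (fun n : ℕ => (n : ℝ) * thermalDist N n) N := by
  have hq : ‖N / (1 + N)‖ < 1 := by
    rw [Real.norm_eq_abs, abs_of_nonneg (by positivity), div_lt_one (by linarith)]
    linarith
  have hval : 1 / (1 + N) * (N / (1 + N) / (1 - N / (1 + N)) ^ 2) = N := by
    have h1N : 1 - N / (1 + N) = 1 / (1 + N) := by field_simp; ring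
    rw [h1N]
    field_simp
  have H := (hasSum_coe_mul_geometric_of_norm_lt_one hq).mul_left (1 / (1 + N))
  rw [hval] at H
  exact H.congr_fun fun n => by simp only [thermalDist]; ring

theorem stmt11_general (η NS NT : ℝ) (hη0 : 0 < η) (hNS : 0 < NS) (hNT : η < NT) :
    let a := NT / (1 + NT)
    let b := NS * (NT - η + 1) / ((1 + NS) * (1 + NT))
    let d := 1 / ((1 + NT) * (1 + NS))
    let z := η / ((NT - η + 1) * NT)
    HasSum (fun p : ℕ × ℕ => (p.1 : ℝ) * (d * a ^ p.1 * b ^ p.2 *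
      ∑ k ∈ Finset.range (min p.1 p.2 + 1), (p.1.choose k : ℝ) * (p.2.choose k : ℝ) * z ^ k))
      (η * NS + NT) := by
  intro a b d z
  set M := η * NS + NT
  have hNT0 : 0 < NT := hη0.trans hNT
  have hw : 0 < NT - η + 1 := by linarith
  have hb0 : 0 ≤ b := by positivity
  have hM : 0 ≤ M := by positivity
  have h1b : 1 - b = (1 + M) / ((1 + NS) * (1 + NT)) := by
    simp only [b, M]
    field_simp
    ring
  have hb : ‖b‖ < 1 := by
    have : 0 < 1 - b := by rw [h1b]; positivity
    rw [Real.norm_eq_abs, abs_of_nonneg hb0]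
    linarith
  have hmarginal (m : ℕ) :
      d * a ^ m * ((z * b / (1 - b) + 1) ^ m / (1 - b)) = thermalDist M m := by
    have hd : d / (1 - b) = 1 / (1 + M) := by
      rw [h1b]
      simp only [d]
      field_simp
    have ha : a * (z * b / (1 - b) + 1) = M / (1 + M) := by
      rw [h1b]
      simp only [a, b, z, M]
      field_simp
      ring
    rw [thermalDist, ← hd, ← ha, mul_pow]
    ring
  refine HasSum.prod_of_nonneg (fun p => by positivity) (fun m => ?_)
    (hasSum_coe_mul_thermalDist hM)
  rw [← hmarginal, ← mul_assoc, ← mul_assoc]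
  refine ((hasSum_pow_mul_sum_choose_mul_choose m hb z).mul_left _).congr_fun fun n => ?_
  ring

theorem stmt11 (η NS NT : ℝ) (hη0 : 0 < η) (hη1 : η < 1) (hNS : 0 < NS) (hNT : η < NT) :
    let a := NT / (1 + NT)
    let b := NS * (NT - η + 1) / ((1 + NS) * (1 + NT))
    let d := 1 / ((1 + NT) * (1 + NS))
    let z := η / ((NT - η + 1) * NT)
    HasSum (fun p : ℕ × ℕ => (p.1 : ℝ) * (d * a ^ p.1 * b ^ p.2 *
      ∑ k ∈ Finset.range (min p.1 p.2 + 1), (p.1.choose k : ℝ) * (p.2.choose k : ℝ) * z ^ k))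
      (η * NS + NT) :=
  stmt11_general η NS NT hη0 hNS hNT
end

section
/- (Upper bound in the hypergeometric ratio lemma) For positive integers α, β and real 0 < z < 1, the ratio F[α+1,β+1;1,z]/F[α,β;1,z] is at most (1/(1-z)²)·(2 + z·β/α + α/β − 1/α − 1/β), where F[a,b;1,z] = ∑_{k≥0} ((a)_k(b)_k/(k!)²) z^k. -/
/-- Rising factorial (Pochhammer symbol) `(x)_k = x (x+1) ⋯ (x+k-1)`. -/
noncomputable def asc (x : ℝ) : ℕ → ℝ
  | 0 => 1
  | k + 1 => asc x k * (x + k)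

/-- Gauss hypergeometric series `F[a,b;1,z] = ∑ₖ (a)ₖ(b)ₖ/(k!)² zᵏ`. -/
noncomputable def Fser (a b z : ℝ) : ℝ :=
  ∑' k : ℕ, asc a k * asc b k / ((k.factorial : ℝ)) ^ 2 * z ^ k

lemma asc_pos {x : ℝ} (hx : 0 < x) : ∀ k, 0 < asc x k
  | 0 => one_pos
  | k + 1 => mul_pos (asc_pos hx k) (by positivity)

lemma asc_succ_left (x : ℝ) : ∀ k, asc (x + 1) k * x = asc x k * (x + k)
  | 0 => by simp [asc]
  | k + 1 => by
    simp only [asc]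
    push_cast
    linear_combination (x + 1 + (k:ℝ)) * asc_succ_left x k

lemma asc_one : ∀ k, asc 1 k = (k.factorial : ℝ)
  | 0 => by simp [asc]
  | k + 1 => by
    simp only [asc, asc_one k, Nat.factorial_succ]
    push_cast; ring

lemma asc_le (k : ℕ) : ∀ (m : ℕ), 1 ≤ m →
    asc (m : ℝ) k ≤ (k.factorial : ℝ) * ((k : ℝ) + m) ^ m := by
  intro m
  induction m with
  | zero => omega
  | succ m ih =>
    intro _
    rcases Nat.eq_or_lt_of_le (Nat.one_le_iff_ne_zero.mpr (Nat.succ_ne_zero m)) with h | h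
    · -- m + 1 = 1
      have hm : m = 0 := by omega
      subst hm
      push_cast
      rw [asc_one]
      have hf : (1:ℝ) ≤ (k.factorial : ℝ) := by exact_mod_cast k.factorial_pos
      have hk : (0:ℝ) ≤ (k:ℝ) := Nat.cast_nonneg k
      nlinarith
    · have hm1 : 1 ≤ m := by omega
      have ih' := ih hm1
      have hpos : (0:ℝ) < m := by exact_mod_cast Nat.pos_of_ne_zero (by omega)
      have key : asc ((m:ℝ) + 1) k * m = asc (m:ℝ) k * ((m:ℝ) + k) := asc_succ_left _ k
      have hascpos : 0 < asc (m:ℝ) k := asc_pos hpos k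
      have hm1' : (1:ℝ) ≤ (m:ℝ) := by exact_mod_cast hm1
      have h2 : asc ((m:ℝ) + 1) k ≤ asc (m:ℝ) k * ((m:ℝ) + k) := by
        nlinarith [asc_pos (show (0:ℝ) < (m:ℝ) + 1 by linarith) k, key]
      have h3 : ((k:ℝ) + m) ^ m ≤ ((k:ℝ) + m + 1) ^ m := by
        apply pow_le_pow_left₀ (by positivity); linarith
      have hfac : (0:ℝ) ≤ (k.factorial : ℝ) := by positivity
      push_cast
      calc asc ((m:ℝ)+1) k ≤ asc (m:ℝ) k * ((m:ℝ) + k) := h2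
        _ ≤ ((k.factorial : ℝ) * ((k:ℝ) + m) ^ m) * ((m:ℝ) + k) := by
            apply mul_le_mul_of_nonneg_right ih'; positivity
        _ ≤ ((k.factorial : ℝ) * ((k:ℝ) + m + 1) ^ m) * ((m:ℝ) + k + 1) := by
            have : (0:ℝ) ≤ (m:ℝ) + k := by positivity
            apply mul_le_mul (by nlinarith [h3]) (by linarith) (by linarith) (by positivity)
        _ = (k.factorial : ℝ) * ((k:ℝ) + ((m:ℝ)+1)) ^ (m+1) := by ring

set_option maxHeartbeats 1000000 in
theorem stmt14 (α β : ℕ) (hα : 0 < α) (hβ : 0 < β) (z : ℝ) (hz0 : 0 < z) (hz1 : z < 1) :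
    Fser ((α : ℝ) + 1) ((β : ℝ) + 1) z / Fser (α : ℝ) (β : ℝ) z
      ≤ 1 / (1 - z) ^ 2 *
          (2 + z * (β : ℝ) / (α : ℝ) + (α : ℝ) / (β : ℝ) - 1 / (α : ℝ) - 1 / (β : ℝ)) := by
  have ha1 : (1:ℝ) ≤ (α:ℝ) := by exact_mod_cast hα
  have hb1 : (1:ℝ) ≤ (β:ℝ) := by exact_mod_cast hβ
  set a := (α:ℝ) with ha_def
  set b := (β:ℝ) with hb_def
  have ha0 : (0:ℝ) < a := by linarith
  have hb0 : (0:ℝ) < b := by linarith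
  have h1z : (0:ℝ) < 1 - z := by linarith
  set t : ℕ → ℝ := fun k => asc a k * asc b k / ((k.factorial : ℝ)) ^ 2 * z ^ k with ht_def
  have t_pos : ∀ k, 0 < t k := fun k =>
    mul_pos (div_pos (mul_pos (asc_pos ha0 k) (asc_pos hb0 k)) (by positivity)) (pow_pos hz0 k)
  have t_zero : t 0 = 1 := by simp [ht_def, asc]
  have t_succ : ∀ k, t (k+1) * ((k:ℝ)+1)^2 = (a + k) * (b + k) * z * t k := by
    intro k
    have hf : ((k.factorial:ℝ)) ≠ 0 := by positivity
    simp only [ht_def, asc, Nat.factorial_succ]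
    push_cast
    field_simp
    ring
  -- bound by polynomial times geometric
  set N := α + β with hN_def
  have hN1 : 1 ≤ N := by omega
  have hkN1 : ∀ k : ℕ, (1:ℝ) ≤ (k:ℝ) + (N:ℝ) := by
    intro k
    have : (1:ℝ) ≤ (N:ℝ) := by exact_mod_cast hN1
    have := Nat.cast_nonneg (α := ℝ) k
    linarith
  have t_le0 : ∀ k, t k ≤ ((k:ℝ) + N)^N * z^k := by
    intro k
    have h1 := asc_le k α hα
    have h2 := asc_le k β hβ
    have haN : (a:ℝ) ≤ (N:ℝ) := by rw [ha_def, hN_def]; push_cast; linarith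
    have hbN : (b:ℝ) ≤ (N:ℝ) := by rw [hb_def, hN_def]; push_cast; linarith
    have hab : asc a k * asc b k ≤ (k.factorial:ℝ)^2 * (((k:ℝ)+a)^α * ((k:ℝ)+b)^β) := by
      have h3 := mul_le_mul h1 h2 (asc_pos hb0 k).le (by positivity)
      calc asc a k * asc b k ≤ _ := h3
        _ = (k.factorial:ℝ)^2 * (((k:ℝ)+a)^α * ((k:ℝ)+b)^β) := by ring
    have step1 : t k ≤ (((k:ℝ)+a)^α * ((k:ℝ)+b)^β) * z^k := by
      simp only [ht_def]
      apply mul_le_mul_of_nonneg_right _ (by positivity)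
      rw [div_le_iff₀ (by positivity)]
      linarith [hab]
    have step2 : ((k:ℝ)+a)^α * ((k:ℝ)+b)^β ≤ ((k:ℝ)+N)^N := by
      have p1 : ((k:ℝ)+a)^α ≤ ((k:ℝ)+N)^α :=
        pow_le_pow_left₀ (by positivity) (by linarith) α
      have p2 : ((k:ℝ)+b)^β ≤ ((k:ℝ)+N)^β :=
        pow_le_pow_left₀ (by positivity) (by linarith) β
      calc ((k:ℝ)+a)^α * ((k:ℝ)+b)^β ≤ ((k:ℝ)+N)^α * ((k:ℝ)+N)^β := by
            apply mul_le_mul p1 p2 (by positivity) (by positivity)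
        _ = ((k:ℝ)+N)^N := by rw [← pow_add, hN_def]
    calc t k ≤ (((k:ℝ)+a)^α * ((k:ℝ)+b)^β) * z^k := step1
      _ ≤ ((k:ℝ)+N)^N * z^k := mul_le_mul_of_nonneg_right step2 (by positivity)
  set P : ℕ → ℝ := fun k => ((k:ℝ) + N)^(N+2) * z^k with hP_def
  have hP : Summable P := by
    have hz' : ‖z‖ < 1 := by rw [Real.norm_eq_abs, abs_of_pos hz0]; exact hz1
    have hQ : Summable (fun n : ℕ => (n:ℝ)^(N+2) * z^n) :=
      summable_pow_mul_geometric_of_norm_lt_one _ hz'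
    have hQ2 : Summable (fun n : ℕ => ((n + N :ℕ):ℝ)^(N+2) * z^(n + N)) :=
      (summable_nat_add_iff (f := fun n : ℕ => (n:ℝ)^(N+2) * z^n) N).mpr hQ
    have hzN : z^N ≠ 0 := by positivity
    have := hQ2.mul_right ((z^N)⁻¹)
    apply this.congr
    intro n
    simp only [hP_def]
    push_cast
    rw [pow_add z n N]
    field_simp
  have hbound : ∀ k : ℕ, ((k:ℝ) + N)^2 * t k ≤ P k := by
    intro k
    calc ((k:ℝ)+N)^2 * t k ≤ ((k:ℝ)+N)^2 * (((k:ℝ)+N)^N * z^k) :=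
          mul_le_mul_of_nonneg_left (t_le0 k) (by positivity)
      _ = P k := by simp only [hP_def]; rw [pow_add]; ring
  have habk : ∀ k : ℕ, (a + k) * (b + k) * t k ≤ P k := by
    intro k
    refine le_trans ?_ (hbound k)
    apply mul_le_mul_of_nonneg_right _ (t_pos k).le
    have haN : (a:ℝ) ≤ (N:ℝ) := by rw [ha_def, hN_def]; push_cast; linarith
    have hbN : (b:ℝ) ≤ (N:ℝ) := by rw [hb_def, hN_def]; push_cast; linarith
    have hk : (0:ℝ) ≤ (k:ℝ) := Nat.cast_nonneg k
    nlinarith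
  have hsum_t : Summable t := by
    apply Summable.of_nonneg_of_le (fun k => (t_pos k).le) _ hP
    intro k
    refine le_trans ?_ (hbound k)
    have h2 : (1:ℝ) ≤ ((k:ℝ)+N)^2 := by nlinarith [sq_nonneg ((k:ℝ)+N-1), hkN1 k]
    nlinarith [t_pos k, h2]
  have hsum_kt : Summable (fun k : ℕ => (k:ℝ) * t k) := by
    apply Summable.of_nonneg_of_le (fun k => mul_nonneg (Nat.cast_nonneg k) (t_pos k).le) _ hP
    intro k
    refine le_trans ?_ (hbound k)
    have hk : (0:ℝ) ≤ (k:ℝ) := Nat.cast_nonneg k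
    have hNc : (1:ℝ) ≤ (N:ℝ) := by exact_mod_cast hN1
    have h2 : (k:ℝ) ≤ ((k:ℝ)+N)^2 := by nlinarith [sq_nonneg ((k:ℝ)+N-1)]
    exact mul_le_mul_of_nonneg_right h2 (t_pos k).le
  have hsum_k2t : Summable (fun k : ℕ => (k:ℝ)^2 * t k) := by
    apply Summable.of_nonneg_of_le (fun k => mul_nonneg (by positivity) (t_pos k).le) _ hP
    intro k
    refine le_trans ?_ (hbound k)
    have hk : (0:ℝ) ≤ (k:ℝ) := Nat.cast_nonneg k
    have hNc : (1:ℝ) ≤ (N:ℝ) := by exact_mod_cast hN1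
    have h2 : (k:ℝ)^2 ≤ ((k:ℝ)+N)^2 := by nlinarith [mul_nonneg hk (le_trans zero_le_one hNc)]
    exact mul_le_mul_of_nonneg_right h2 (t_pos k).le
  have hsum_ab : Summable (fun k : ℕ => (a + k) * (b + k) * t k) := by
    apply Summable.of_nonneg_of_le _ habk hP
    intro k
    have hk : (0:ℝ) ≤ (k:ℝ) := Nat.cast_nonneg k
    have := (t_pos k).le
    positivity
  set F := ∑' k, t k with hF_def
  set S1 := ∑' k : ℕ, (k:ℝ) * t k with hS1_def
  set S2 := ∑' k : ℕ, (k:ℝ)^2 * t k with hS2_def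
  set V := ∑' k : ℕ, (a + k) * (b + k) * t k with hV_def
  have hF1 : 1 ≤ F := by
    have := Summable.le_tsum hsum_t 0 (fun j _ => (t_pos j).le)
    rw [t_zero] at this
    exact this
  have hF0 : (0:ℝ) < F := by linarith
  have hS1nonneg : 0 ≤ S1 :=
    tsum_nonneg fun k => mul_nonneg (Nat.cast_nonneg k) (t_pos k).le
  -- V = abF + (a+b)S1 + S2
  have hVeq : V = a*b*F + (a+b)*S1 + S2 := by
    rw [hV_def]
    rw [tsum_congr (fun k => show (a+k)*(b+k)*t k
        = a*b*t k + (a+b)*((k:ℝ)*t k) + (k:ℝ)^2*t k by push_cast; ring)]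
    rw [Summable.tsum_add ((hsum_t.mul_left (a*b)).add (hsum_kt.mul_left (a+b))) hsum_k2t,
        Summable.tsum_add (hsum_t.mul_left (a*b)) (hsum_kt.mul_left (a+b)),
        tsum_mul_left, tsum_mul_left]
  -- S2 = z * V
  have hS2V : S2 = z * V := by
    rw [hS2_def, Summable.tsum_eq_zero_add hsum_k2t]
    simp only [Nat.cast_zero, ne_eq, OfNat.ofNat_ne_zero, not_false_eq_true, zero_pow, zero_mul,
      zero_add]
    rw [tsum_congr (fun k => show ((k+1:ℕ):ℝ)^2 * t (k+1) = z * ((a+k)*(b+k)*t k) by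
      push_cast
      linear_combination t_succ k)]
    rw [tsum_mul_left]
  have hVz : V * (1-z) = a*b*F + (a+b)*S1 := by
    have h : V * (1-z) = V - z*V := by ring
    rw [h, ← hS2V]
    linarith [hVeq]
  -- key inequality
  have hstep : ∀ k : ℕ, (((k+1:ℕ):ℝ)+1-a) * t (k+1) ≤ ((k:ℝ)+b)*(z*t k) := by
    intro k
    push_cast
    rcases le_or_gt ((k:ℝ)+2) a with h | h
    · have hle : ((k:ℝ)+1+1-a) ≤ 0 := by linarith
      have := mul_nonpos_of_nonpos_of_nonneg hle (t_pos (k+1)).le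
      have hk' : (0:ℝ) ≤ (k:ℝ) := Nat.cast_nonneg k
      have hr : (0:ℝ) ≤ ((k:ℝ)+b)*(z*t k) :=
        mul_nonneg (by linarith) (mul_nonneg hz0.le (t_pos k).le)
      linarith
    · have hk2 : (0:ℝ) < ((k:ℝ)+1)^2 := by positivity
      have hkey : ((k:ℝ)+2-a)*((k:ℝ)+a) ≤ ((k:ℝ)+1)^2 := by nlinarith [sq_nonneg (a-1)]
      have hk : (0:ℝ) ≤ (k:ℝ) := Nat.cast_nonneg k
      have hmul : (((k:ℝ)+1+1-a) * t (k+1)) * ((k:ℝ)+1)^2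
          ≤ (((k:ℝ)+b)*(z*t k)) * ((k:ℝ)+1)^2 := by
        have hL : (((k:ℝ)+1+1-a) * t (k+1)) * ((k:ℝ)+1)^2
            = ((k:ℝ)+1+1-a) * ((a+(k:ℝ))*(b+(k:ℝ))*z*t k) := by
          rw [mul_assoc, t_succ k]
        rw [hL]
        nlinarith [mul_nonneg (mul_nonneg (mul_pos hz0 (t_pos k)).le
          (show (0:ℝ) ≤ b + k by linarith)) (sub_nonneg.mpr hkey)]
      exact le_of_mul_le_mul_right hmul hk2
  have hsum_A : Summable (fun k : ℕ => ((k:ℝ)+1-a) * t k) := by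
    have h := hsum_kt.add (hsum_t.mul_left (1-a))
    exact h.congr fun k => by ring
  have hsum_A1 : Summable (fun k : ℕ => (((k+1:ℕ):ℝ)+1-a) * t (k+1)) :=
    (summable_nat_add_iff (f := fun k : ℕ => ((k:ℝ)+1-a) * t k) 1).mpr hsum_A
  have hsum_B : Summable (fun k : ℕ => ((k:ℝ)+b) * (z * t k)) := by
    have h := (hsum_kt.mul_left z).add (hsum_t.mul_left (z*b))
    exact h.congr fun k => by ring
  have e1 : ∑' k : ℕ, ((k:ℝ)+1-a)*t k = S1 + (1-a)*F := by
    rw [tsum_congr (fun k : ℕ => show ((k:ℝ)+1-a)*t k = (k:ℝ)*t k + (1-a)*t k by ring),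
        Summable.tsum_add hsum_kt (hsum_t.mul_left (1-a)), tsum_mul_left]
  have e2 : ∑' k : ℕ, ((k:ℝ)+b)*(z*t k) = z*S1 + (z*b)*F := by
    rw [tsum_congr (fun k : ℕ => show ((k:ℝ)+b)*(z*t k) = z*((k:ℝ)*t k) + (z*b)*t k by ring),
        Summable.tsum_add (hsum_kt.mul_left z) (hsum_t.mul_left (z*b)), tsum_mul_left, tsum_mul_left]
  have e3 : ∑' k : ℕ, ((k:ℝ)+1-a)*t k
      = (((0:ℕ):ℝ)+1-a)*t 0 + ∑' k : ℕ, (((k+1:ℕ):ℝ)+1-a)*t (k+1) :=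
    Summable.tsum_eq_zero_add hsum_A
  have e4 : ∑' k : ℕ, (((k+1:ℕ):ℝ)+1-a)*t (k+1) ≤ ∑' k : ℕ, ((k:ℝ)+b)*(z*t k) :=
    Summable.tsum_le_tsum hstep hsum_A1 hsum_B
  have e5 : (((0:ℕ):ℝ)+1-a)*t 0 ≤ 0 := by
    rw [t_zero]
    push_cast
    linarith
  have hS1z : (1-z)*S1 ≤ (a-1+z*b)*F := by nlinarith [e1, e2, e3, e4, e5]
  -- Fser identities
  have hFser1 : Fser a b z = F := by
    rw [hF_def]
    simp only [ht_def, Fser]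
  have hFser2 : Fser (a+1) (b+1) z = V / (a*b) := by
    rw [hV_def]
    simp only [Fser]
    rw [tsum_congr (fun k => show asc (a+1) k * asc (b+1) k / ((k.factorial:ℝ))^2 * z^k
        = ((a+k)*(b+k)*t k) / (a*b) by
      have h1 := asc_succ_left a k
      have h2 := asc_succ_left b k
      have hf : ((k.factorial:ℝ)) ≠ 0 := by positivity
      have h12 : (asc (a+1) k * a) * (asc (b+1) k * b)
          = (asc a k * (a+k)) * (asc b k * (b+k)) := by rw [h1, h2]
      have hab0 : (a*b) ≠ 0 := by positivity
      have h3 : asc (a+1) k * asc (b+1) k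
          = asc a k * asc b k * ((a+(k:ℝ))*(b+(k:ℝ))) / (a*b) := by
        rw [eq_div_iff hab0]; linear_combination h12
      simp only [ht_def]
      rw [h3]
      ring)]
    rw [tsum_div_const]
  rw [hFser1, hFser2, div_div, div_le_iff₀ (by positivity)]
  have habD : a*b*(2 + z*b/a + a/b - 1/a - 1/b) = 2*a*b + z*b^2 + a^2 - a - b := by
    field_simp
    ring
  have hV2 : V*(1-z)^2 ≤ (2*a*b + z*b^2 + a^2 - a - b)*F := by
    have hh : V*(1-z)^2 = (a*b*F + (a+b)*S1)*(1-z) := by rw [← hVz]; ring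
    have hh2 : (a+b)*((1-z)*S1) ≤ (a+b)*((a-1+z*b)*F) :=
      mul_le_mul_of_nonneg_left hS1z (by linarith)
    nlinarith [hh, hh2]
  rw [show (1:ℝ)/(1-z)^2 * (2 + z*b/a + a/b - 1/a - 1/b) * (a*b*F)
      = ((a*b*(2 + z*b/a + a/b - 1/a - 1/b))*F)/(1-z)^2 by ring, habD,
    le_div_iff₀ (by positivity)]
  exact hV2
end
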